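/- If θ₁, φ₁ are i.i.d. from a continuous distribution with cdf F, and p₀ denotes the conditional probability (given θ₁, φ₁) that an independent arc with i.i.d. F endpoints misses the arc [θ₁,φ₁], then p₀ = (1/2)(F(θ₁) − F(φ₁))² if θ₁ > φ₁, and p₀ = (1/2)(F(θ₁) − F(φ₁) + 1)² if θ₁ ≤ φ₁. In particular, applying the probability integral transform, the distribution of p₀ does not depend on F. -/

import Mathlib

/-!
The random arc `[θ, φ]` misses `[θ₁, φ₁]` exactly when both of its endpoints lie in the
complementary arc, in anticlockwise order. For a law `μ` without atoms, two independent
`μ`-points of a set `s` fall in increasing order with probability `μ(s)² / 2`: swapping the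
coordinates preserves `μ ⊗ μ` and the diagonal is null. Writing the complementary arc as one
or two intervals gives `p₀` in terms of `F`.

For the second claim, `F(θ)` is uniform on `(0, 1]` (probability integral transform), and
`p₀(θ₁, φ₁)` agrees with the same expression for uniform endpoints evaluated at
`(F θ₁, F φ₁)` except on the ties `F θ₁ = F φ₁`, which are null.
-/

open MeasureTheory

/-- The anticlockwise arc `[θ, φ]` misses the fixed anticlockwise arc `[θ₁, φ₁]`. -/
def arcMiss (θ₁ φ₁ θ φ : ℝ) : Prop :=
  if θ₁ ≤ φ₁ then
    (θ < φ ∧ φ < θ₁) ∨ (φ₁ < θ ∧ θ < φ) ∨ (φ < θ₁ ∧ φ₁ < θ)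
  else
    (φ₁ < θ ∧ θ < φ ∧ φ < θ₁)

open ProbabilityTheory Set Filter Topology

namespace MeasureTheory.Measure

variable {α : Type*} [MeasurableSpace α]

theorem prod_diagonal_eq_zero [MeasurableEq α] (μ ν : Measure α) [SFinite ν]
    [NullSingletonClass ν] : μ.prod ν (diagonal α) = 0 := by
  have hslice (x : α) : Prod.mk x ⁻¹' diagonal α = {x} := by ext; simp [eq_comm]
  simp [prod_apply measurableSet_diagonal, hslice]

variable [LinearOrder α] [TopologicalSpace α] [OrderClosedTopology α]
  [SecondCountableTopology α] [OpensMeasurableSpace α]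
  (μ : Measure α) [SFinite μ] [NullSingletonClass μ]

theorem two_mul_prod_self_setOf_lt : 2 * μ.prod μ {p | p.1 < p.2} = μ univ ^ 2 := by
  have hswap : μ.prod μ {p : α × α | p.2 < p.1} = μ.prod μ {p | p.1 < p.2} :=
    measurePreserving_swap.measure_preimage measurableSet_lt'.nullMeasurableSet
  have hdisj : Disjoint {p : α × α | p.1 < p.2} {p | p.2 < p.1} :=
    disjoint_left.2 fun p h₁ h₂ => lt_asymm h₁ h₂
  have hsplit : univ \ diagonal α = {p | p.1 < p.2} ∪ {p | p.2 < p.1} := by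
    ext p; simp
  calc 2 * μ.prod μ {p | p.1 < p.2}
      = μ.prod μ ({p | p.1 < p.2} ∪ {p | p.2 < p.1}) := by
        rw [measure_union hdisj (measurableSet_lt measurable_snd measurable_fst), hswap, two_mul]
    _ = μ.prod μ univ := by rw [← hsplit, measure_sdiff_null (prod_diagonal_eq_zero μ μ)]
    _ = μ univ ^ 2 := by rw [← univ_prod_univ, prod_prod, sq]

theorem two_mul_prod_self_setOf_lt_inter (s : Set α) :
    2 * μ.prod μ ({p | p.1 < p.2} ∩ s ×ˢ s) = μ s ^ 2 := by
  have := two_mul_prod_self_setOf_lt (μ.restrict s)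
  rwa [prod_restrict, restrict_apply measurableSet_lt', restrict_apply_univ] at this

theorem measureReal_prod_self_setOf_lt_inter [IsFiniteMeasure μ] (s : Set α) :
    (μ.prod μ).real ({p | p.1 < p.2} ∩ s ×ˢ s) = μ.real s ^ 2 / 2 := by
  have := congrArg ENNReal.toReal (two_mul_prod_self_setOf_lt_inter μ s)
  rw [ENNReal.toReal_mul, ENNReal.toReal_pow] at this
  simp only [measureReal_def]
  norm_num at this
  linarith

end MeasureTheory.Measure

theorem Monotone.exists_preimage_Iic_eq_Iic {β : Type*} [LinearOrder β] [TopologicalSpace β]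
    [OrderClosedTopology β] {F : ℝ → β} (hmono : Monotone F) (hcont : Continuous F) {t : β}
    (hne : (F ⁻¹' Iic t).Nonempty) (hbdd : BddAbove (F ⁻¹' Iic t)) :
    ∃ σ, F ⁻¹' Iic t = Iic σ ∧ F σ = t := by
  set S := F ⁻¹' Iic t
  have hσ : sSup S ∈ S := (isClosed_Iic.preimage hcont).csSup_mem hne hbdd
  refine ⟨sSup S, Subset.antisymm (fun x hx => le_csSup hbdd hx)
    (fun x hx => (hmono hx).trans hσ), le_antisymm hσ ?_⟩
  have hIoi : Ioi (sSup S) ⊆ {x | t ≤ F x} :=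
    fun x hx => (not_le.1 fun hxS => hx.not_ge (le_csSup hbdd hxS)).le
  exact (isClosed_le continuous_const hcont).closure_subset_iff.2 hIoi
    (by rw [closure_Ioi]; exact self_mem_Ici)

/-- The paper's `p₀`: the probability that a random arc with endpoint cdf `F` misses
`[θ₁, φ₁]`. -/
noncomputable def arcMissProb (F : ℝ → ℝ) (θ₁ φ₁ : ℝ) : ℝ :=
  if φ₁ < θ₁ then (F θ₁ - F φ₁) ^ 2 / 2 else (F θ₁ - F φ₁ + 1) ^ 2 / 2

theorem measurable_arcMissProb {F : ℝ → ℝ} (hF : Measurable F) :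
    Measurable fun q : ℝ × ℝ => arcMissProb F q.1 q.2 :=
  Measurable.ite (measurableSet_lt measurable_snd measurable_fst) (by fun_prop) (by fun_prop)

theorem arcMissProb_eq_of_ne {F : ℝ → ℝ} (hF : Monotone F) {θ φ : ℝ} (h : F θ ≠ F φ) :
    arcMissProb F θ φ = arcMissProb id (F θ) (F φ) := by
  rcases lt_or_ge φ θ with hlt | hle
  · simp only [arcMissProb, if_pos hlt, if_pos ((hF hlt.le).lt_of_ne h.symm), id]
  · simp only [arcMissProb, if_neg hle.not_gt, if_neg (hF hle).not_gt, id]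

theorem setOf_arcMiss_of_lt {θ₁ φ₁ : ℝ} (h : φ₁ < θ₁) :
    {p : ℝ × ℝ | arcMiss θ₁ φ₁ p.1 p.2} = {p | p.1 < p.2} ∩ Ioo φ₁ θ₁ ×ˢ Ioo φ₁ θ₁ := by
  ext ⟨θ, φ⟩
  simp only [arcMiss, if_neg h.not_ge, mem_ofPred_eq, mem_inter_iff, mem_prod, mem_Ioo]
  grind

theorem setOf_arcMiss_of_le {θ₁ φ₁ : ℝ} (h : θ₁ ≤ φ₁) :
    {p : ℝ × ℝ | arcMiss θ₁ φ₁ p.1 p.2} =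
      ({p | p.1 < p.2} ∩ Iio θ₁ ×ˢ Iio θ₁) ∪
        (({p | p.1 < p.2} ∩ Ioi φ₁ ×ˢ Ioi φ₁) ∪ Ioi φ₁ ×ˢ Iio θ₁) := by
  ext ⟨θ, φ⟩
  simp only [arcMiss, if_pos h, mem_ofPred_eq, mem_union, mem_inter_iff, mem_prod, mem_Iio,
    mem_Ioi]
  grind

namespace ProbabilityTheory

variable {μ : Measure ℝ} [IsProbabilityMeasure μ]

theorem nullSingletonClass_of_continuous_cdf (h : Continuous (cdf μ)) :
    NullSingletonClass μ where
  measure_singleton a := by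
    rw [← measure_cdf μ, StieltjesFunction.measure_singleton,
      leftLim_eq_of_tendsto ((h.tendsto a).mono_left nhdsWithin_le_nhds), sub_self,
      ENNReal.ofReal_zero]

theorem measureReal_Iio_eq_cdf [NullSingletonClass μ] (x : ℝ) : μ.real (Iio x) = cdf μ x := by
  rw [cdf_eq_real, measureReal_congr Iio_ae_eq_Iic]

theorem measureReal_Ioi_eq_one_sub_cdf (x : ℝ) : μ.real (Ioi x) = 1 - cdf μ x := by
  rw [← compl_Iic, probReal_compl_eq_one_sub measurableSet_Iic, cdf_eq_real]

theorem measureReal_Ioo_eq_cdf_sub [NullSingletonClass μ] {a b : ℝ} (hab : a ≤ b) :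
    μ.real (Ioo a b) = cdf μ b - cdf μ a := by
  rw [measureReal_congr Ioo_ae_eq_Ioc, ← Iic_sdiff_Iic,
    measureReal_sdiff (Iic_subset_Iic.2 hab) measurableSet_Iic, cdf_eq_real, cdf_eq_real]

theorem measure_cdf_preimage_Iic (h : Continuous (cdf μ)) {t : ℝ} (ht0 : 0 ≤ t) (ht1 : t < 1) :
    μ (cdf μ ⁻¹' Iic t) = ENNReal.ofReal t := by
  obtain ⟨x₁, hx₁⟩ := ((tendsto_cdf_atTop μ).eventually (eventually_gt_nhds ht1)).exists
  have hbdd : BddAbove (cdf μ ⁻¹' Iic t) :=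
    ⟨x₁, fun y hy => le_of_not_ge fun hxy => ((cdf μ).mono hxy).not_gt (hy.trans_lt hx₁)⟩
  rcases (cdf μ ⁻¹' Iic t).eq_empty_or_nonempty with hS | hS
  · have ht : t ≤ 0 := ge_of_tendsto (tendsto_cdf_atBot μ) (Eventually.of_forall fun x =>
      le_of_not_ge fun hx => eq_empty_iff_forall_notMem.1 hS x hx)
    rw [hS, measure_empty, le_antisymm ht ht0, ENNReal.ofReal_zero]
  obtain ⟨σ, hσS, hσ⟩ := (cdf μ).mono.exists_preimage_Iic_eq_Iic h hS hbdd
  rw [hσS, ← ofReal_cdf, hσ]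

theorem map_cdf_eq_restrict_Ioc (h : Continuous (cdf μ)) :
    μ.map (cdf μ) = volume.restrict (Ioc 0 1) := by
  have : IsProbabilityMeasure (volume.restrict (Ioc (0 : ℝ) 1)) := ⟨by simp⟩
  refine Measure.ext_of_Iic _ _ fun t => ?_
  rw [Measure.map_apply h.measurable measurableSet_Iic, Measure.restrict_apply measurableSet_Iic]
  rcases lt_or_ge t 0 with ht0 | ht0
  · have hS : cdf μ ⁻¹' Iic t = ∅ :=
      eq_empty_of_forall_notMem fun x hx => (ht0.trans_le (cdf_nonneg μ x)).not_ge hx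
    have hI : Iic t ∩ Ioc (0 : ℝ) 1 = ∅ :=
      eq_empty_of_forall_notMem fun x hx => (hx.1.trans_lt ht0).not_gt hx.2.1
    simp [hS, hI]
  rcases le_or_gt 1 t with ht1 | ht1
  · have hS : cdf μ ⁻¹' Iic t = univ :=
      eq_univ_of_forall fun x => (cdf_le_one μ x).trans ht1
    have hI : Iic t ∩ Ioc (0 : ℝ) 1 = Ioc 0 1 := inter_eq_right.2 fun x hx => hx.2.trans ht1
    simp [hS, hI]
  rw [Iic_inter_Ioc_of_le ht1.le, Real.volume_Ioc, sub_zero, measure_cdf_preimage_Iic h ht0 ht1]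

theorem measureReal_setOf_arcMiss [NullSingletonClass μ] (θ₁ φ₁ : ℝ) :
    (μ.prod μ).real {p | arcMiss θ₁ φ₁ p.1 p.2} = arcMissProb (cdf μ) θ₁ φ₁ := by
  rcases lt_or_ge φ₁ θ₁ with h | h
  · rw [setOf_arcMiss_of_lt h, Measure.measureReal_prod_self_setOf_lt_inter,
      measureReal_Ioo_eq_cdf_sub h.le, arcMissProb, if_pos h]
  have hBC : Disjoint ({p : ℝ × ℝ | p.1 < p.2} ∩ Ioi φ₁ ×ˢ Ioi φ₁) (Ioi φ₁ ×ˢ Iio θ₁) :=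
    disjoint_left.2 fun p ⟨_, _, hB⟩ ⟨_, hC⟩ => (h.trans_lt (lt_trans hB hC)).false
  have hA : Disjoint ({p : ℝ × ℝ | p.1 < p.2} ∩ Iio θ₁ ×ˢ Iio θ₁)
      (({p | p.1 < p.2} ∩ Ioi φ₁ ×ˢ Ioi φ₁) ∪ Ioi φ₁ ×ˢ Iio θ₁) := by
    refine disjoint_left.2 fun p ⟨_, hA, _⟩ hBC => ?_
    have hφ : φ₁ < p.1 := by rcases hBC with ⟨_, hB, _⟩ | ⟨hC, _⟩ <;> assumption
    exact (lt_irrefl _) (hA.trans_le h |>.trans hφ)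
  rw [setOf_arcMiss_of_le h, measureReal_union hA
    ((measurableSet_lt'.inter (measurableSet_Ioi.prod measurableSet_Ioi)).union
      (measurableSet_Ioi.prod measurableSet_Iio)),
    measureReal_union hBC (measurableSet_Ioi.prod measurableSet_Iio),
    Measure.measureReal_prod_self_setOf_lt_inter, Measure.measureReal_prod_self_setOf_lt_inter,
    measureReal_prod_prod, measureReal_Iio_eq_cdf, measureReal_Ioi_eq_one_sub_cdf, arcMissProb,
    if_neg h.not_gt]
  ring

theorem map_arcMissProb_cdf (h : Continuous (cdf μ)) :
    (μ.prod μ).map (fun q => arcMissProb (cdf μ) q.1 q.2) =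
      ((volume.restrict (Ioc 0 1)).prod (volume.restrict (Ioc 0 1))).map
        fun q => arcMissProb id q.1 q.2 := by
  have hFm : Measurable (cdf μ) := h.measurable
  have hpair : (μ.prod μ).map (Prod.map (cdf μ) (cdf μ)) =
      (volume.restrict (Ioc 0 1)).prod (volume.restrict (Ioc 0 1)) := by
    rw [← Measure.map_prod_map _ _ hFm hFm, map_cdf_eq_restrict_Ioc h]
  have hties : μ.prod μ (Prod.map (cdf μ) (cdf μ) ⁻¹' diagonal ℝ) = 0 := by
    rw [← Measure.map_apply (hFm.prodMap hFm) measurableSet_diagonal, hpair,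
      Measure.prod_diagonal_eq_zero]
  have hae : (fun q => arcMissProb (cdf μ) q.1 q.2) =ᵐ[μ.prod μ]
      (fun q => arcMissProb id q.1 q.2) ∘ Prod.map (cdf μ) (cdf μ) :=
    measure_mono_null
      (fun q hq => by_contra fun hne => hq (arcMissProb_eq_of_ne (cdf μ).mono hne)) hties
  rw [Measure.map_congr hae, ← Measure.map_map (measurable_arcMissProb measurable_id)
    (hFm.prodMap hFm), hpair]

end ProbabilityTheory

theorem stmt_7 (μ ν : Measure ℝ) [IsProbabilityMeasure μ] [IsProbabilityMeasure ν]
    (F G : ℝ → ℝ)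
    (hF : ∀ x, F x = (μ (Set.Iic x)).toReal) (hG : ∀ x, G x = (ν (Set.Iic x)).toReal)
    (hFc : Continuous F) (hGc : Continuous G) :
    (∀ θ₁ φ₁ : ℝ,
      ((μ.prod μ) {p : ℝ × ℝ | arcMiss θ₁ φ₁ p.1 p.2}).toReal =
        if φ₁ < θ₁ then (F θ₁ - F φ₁) ^ 2 / 2 else (F θ₁ - F φ₁ + 1) ^ 2 / 2) ∧
    Measure.map (fun q : ℝ × ℝ =>
        if q.2 < q.1 then (F q.1 - F q.2) ^ 2 / 2 else (F q.1 - F q.2 + 1) ^ 2 / 2)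
      (μ.prod μ) =
    Measure.map (fun q : ℝ × ℝ =>
        if q.2 < q.1 then (G q.1 - G q.2) ^ 2 / 2 else (G q.1 - G q.2 + 1) ^ 2 / 2)
      (ν.prod ν) := by
  obtain rfl : F = cdf μ := funext fun x => by rw [hF, cdf_eq_real, measureReal_def]
  obtain rfl : G = cdf ν := funext fun x => by rw [hG, cdf_eq_real, measureReal_def]
  have : NullSingletonClass μ := nullSingletonClass_of_continuous_cdf hFc
  exact ⟨measureReal_setOf_arcMiss,
    (map_arcMissProb_cdf hFc).trans (map_arcMissProb_cdf hGc).symm⟩
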